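/- arXiv:1807.06476 — 2 statements merged into one kernel-verified Lean document; each statement's English description precedes it below -/
import Mathlib

section
/- Let T be a bijective linear operator on M_{m×n}(S) that preserves the rank of every rank-1 matrix (r(A) = 1 implies r(T(A)) = 1). Then there exist a permutation ρ of {1,…,m}, a permutation σ of {1,…,n}, and units α_{ij} of S such that either T(E_{ij}) = α_{ij} E_{ρ(i),σ(j)} for all (i,j), or m = n and T(E_{ij}) = α_{ij} E_{σ(j),ρ(i)} for all (i,j). -/
open scoped Classical

/-- The semiring rank of an `m × n` matrix over `S`: the least positive `k` such that
`A = B * C` for some `m × k` matrix `B` and `k × n` matrix `C`; the rank of `0` is `0`. -/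
noncomputable def matRank {S : Type*} [CommSemiring S] {m n : ℕ}
    (A : Matrix (Fin m) (Fin n) S) : ℕ :=
  if A = 0 then 0
  else sInf {k : ℕ | 0 < k ∧
    ∃ (B : Matrix (Fin m) (Fin k) S) (C : Matrix (Fin k) (Fin n) S), A = B * C}

/-!
Write `E p` for the matrix unit at the cell `p`. Pulling `E q` back along `T`, and using that in
`S` a sum vanishes only if every summand does and is a unit only if some summand is, one finds
that `T` sends each `E p` to a unit multiple of `E (π p)` for a permutation `π` of the cells.
As `E p + E q` has rank one exactly when `p` and `q` share a row or a column, `π` preserves this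
relation, and such a permutation of an `m × n` grid maps rows to rows and columns to columns, or
(then `m = n`) rows to columns and columns to rows.
-/

open Function

section SameLine

variable {α β γ δ ι : Type*}

def SameLine (p q : α × β) : Prop := p.1 = q.1 ∨ p.2 = q.2

theorem sameLine_swap {p q : α × β} : SameLine p.swap q.swap ↔ SameLine p q := Or.comm

theorem fst_eq_of_sameLine {p q r : α × β} (hpq : p ≠ q) (h : p.1 = q.1)
    (hp : SameLine r p) (hq : SameLine r q) : r.1 = p.1 := by
  rcases hp with hp | hp
  · exact hp
  rcases hq with hq | hq
  · exact hq.trans h.symm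
  · exact absurd (Prod.ext h (hp.symm.trans hq)) hpq

theorem fst_const_or_snd_const_of_pairwise_sameLine {f : ι → α × β} (hf : Injective f)
    (h : ∀ a b, SameLine (f a) (f b)) :
    (∀ a b, (f a).1 = (f b).1) ∨ ∀ a b, (f a).2 = (f b).2 := by
  rcases subsingleton_or_nontrivial ι with hι | hι
  · exact Or.inl fun a b => by rw [Subsingleton.elim a b]
  obtain ⟨a₀, a₁, hne⟩ := exists_pair_ne ι
  rcases h a₀ a₁ with h01 | h01
  · have key a : (f a).1 = (f a₀).1 := fst_eq_of_sameLine (hf.ne hne) h01 (h a a₀) (h a a₁)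
    exact Or.inl fun a b => by rw [key a, key b]
  · have key a : (f a).2 = (f a₀).2 :=
      fst_eq_of_sameLine (Prod.swap_injective.ne (hf.ne hne)) h01
        (sameLine_swap.2 (h a a₀)) (sameLine_swap.2 (h a a₁))
    exact Or.inr fun a b => by rw [key a, key b]

-- Column `j` of `π` is row `j` of `π ∘ Prod.swap`.
def MapsRowIntoRow (π : α × β → γ × δ) (i : α) : Prop := ∀ j j', (π (i, j)).1 = (π (i, j')).1

def MapsRowIntoColumn (π : α × β → γ × δ) (i : α) : Prop := ∀ j j', (π (i, j)).2 = (π (i, j')).2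

variable {π : α × β → γ × δ}

theorem mapsRowIntoRow_or_mapsRowIntoColumn (hinj : Injective π)
    (hπ : ∀ p q, SameLine p q → SameLine (π p) (π q)) (i : α) :
    MapsRowIntoRow π i ∨ MapsRowIntoColumn π i :=
  fst_const_or_snd_const_of_pairwise_sameLine (f := fun j => π (i, j))
    (fun _ _ h => congrArg Prod.snd (hinj h)) fun _ _ => hπ _ _ (Or.inl rfl)

theorem not_mapsRowIntoRow_and_mapsRowIntoColumn [Nontrivial β] (hinj : Injective π)
    (hπ : ∀ p q, SameLine p q → SameLine (π p) (π q)) {i i' : α}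
    (hi : MapsRowIntoRow π i) (hi' : MapsRowIntoColumn π i') : False := by
  obtain ⟨j₀, j₁, hne⟩ := exists_pair_ne β
  -- each column meets the two image lines in a common cell, the corner where they cross
  have corner j : ∃ k, π (k, j) = ((π (i, j₀)).1, (π (i', j₀)).2) := by
    rcases hπ (i, j) (i', j) (Or.inr rfl) with h | h
    · exact ⟨i', Prod.ext (h.symm.trans (hi j j₀)) (hi' j j₀)⟩
    · exact ⟨i, Prod.ext (hi j j₀) (h.trans (hi' j j₀))⟩
  obtain ⟨k₀, hk₀⟩ := corner j₀
  obtain ⟨k₁, hk₁⟩ := corner j₁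
  exact hne (congrArg Prod.snd (hinj (hk₀.trans hk₁.symm)))

theorem forall_mapsRowIntoRow_or_forall_mapsRowIntoColumn (hinj : Injective π)
    (hπ : ∀ p q, SameLine p q → SameLine (π p) (π q)) :
    (∀ i, MapsRowIntoRow π i) ∨ ∀ i, MapsRowIntoColumn π i := by
  rcases subsingleton_or_nontrivial β with hβ | hβ
  · exact Or.inl fun i j j' => by rw [Subsingleton.elim j j']
  by_cases h : ∀ i, MapsRowIntoRow π i
  · exact Or.inl h
  obtain ⟨i₀, hi₀⟩ := not_forall.1 h
  have hcol₀ := (mapsRowIntoRow_or_mapsRowIntoColumn hinj hπ i₀).resolve_left hi₀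
  exact Or.inr fun i => (mapsRowIntoRow_or_mapsRowIntoColumn hinj hπ i).resolve_left
    fun hi => not_mapsRowIntoRow_and_mapsRowIntoColumn hinj hπ hi hcol₀

theorem exists_injective_eq_prodMap [Nonempty α] [Nonempty β] (hinj : Injective π)
    (hrow : ∀ i, MapsRowIntoRow π i) (hcol : ∀ j, MapsRowIntoColumn (π ∘ Prod.swap) j) :
    ∃ (ρ : α → γ) (σ : β → δ), Injective ρ ∧ Injective σ ∧ π = Prod.map ρ σ := by
  obtain ⟨i₀⟩ := ‹Nonempty α›
  obtain ⟨j₀⟩ := ‹Nonempty β›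
  have hπ : π = Prod.map (fun i => (π (i, j₀)).1) (fun j => (π (i₀, j)).2) :=
    funext fun ⟨i, j⟩ => Prod.ext (hrow i j j₀) (hcol j i i₀)
  exact ⟨_, _, (Prod.map_injective.1 (hπ ▸ hinj)).1, (Prod.map_injective.1 (hπ ▸ hinj)).2, hπ⟩

theorem subsingleton_of_injective_prod_to_right [Finite α] [Finite β] [Nonempty β]
    {f : α × β → β} (hf : Injective f) : Subsingleton α := by
  have hcard := Nat.card_le_card_of_injective f hf
  rw [Nat.card_prod] at hcard
  exact Finite.card_le_one_iff_subsingleton.1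
    (Nat.le_of_mul_le_mul_right (hcard.trans_eq (one_mul _).symm) Nat.card_pos)

theorem exists_perm_of_sameLine [Finite α] [Finite β] {π : α × β → α × β}
    (hinj : Injective π) (hπ : ∀ p q, SameLine p q → SameLine (π p) (π q)) :
    (∃ (ρ : Equiv.Perm α) (σ : Equiv.Perm β), ∀ i j, π (i, j) = (ρ i, σ j)) ∨
      ∃ (ρ : α ≃ β) (σ : β ≃ α), ∀ i j, π (i, j) = (σ j, ρ i) := by
  rcases isEmpty_or_nonempty α with hα | hα
  · exact Or.inl ⟨1, 1, fun i => isEmptyElim i⟩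
  rcases isEmpty_or_nonempty β with hβ | hβ
  · exact Or.inl ⟨1, 1, fun _ j => isEmptyElim j⟩
  suffices (∀ i, MapsRowIntoRow π i) ∧ (∀ j, MapsRowIntoColumn (π ∘ Prod.swap) j) ∨
      (∀ i, MapsRowIntoColumn π i) ∧ (∀ j, MapsRowIntoRow (π ∘ Prod.swap) j) by
    rcases this with ⟨hrow, hcol⟩ | ⟨hrow, hcol⟩
    · obtain ⟨ρ, σ, hρ, hσ, rfl⟩ := exists_injective_eq_prodMap hinj hrow hcol
      exact Or.inl ⟨.ofBijective ρ hρ.bijective_of_finite, .ofBijective σ hσ.bijective_of_finite,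
        fun _ _ => rfl⟩
    · obtain ⟨ρ, σ, hρ, hσ, hπ⟩ :=
        exists_injective_eq_prodMap (π := Prod.swap ∘ π) (Prod.swap_injective.comp hinj) hrow hcol
      refine Or.inr ⟨.ofBijective ρ (hρ.bijective_of_nat_card_le
        (Nat.card_le_card_of_injective σ hσ)), .ofBijective σ (hσ.bijective_of_nat_card_le
        (Nat.card_le_card_of_injective ρ hρ)), fun i j => ?_⟩
      simpa using congrArg Prod.swap (congrFun hπ (i, j))
  have hπ' p q (h : SameLine p q) : SameLine ((π ∘ Prod.swap) p) ((π ∘ Prod.swap) q) :=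
    hπ _ _ (sameLine_swap.2 h)
  -- in the two mixed cases the image is a single row (column), so `α` (`β`) is a singleton
  rcases forall_mapsRowIntoRow_or_forall_mapsRowIntoColumn hinj hπ with hrow | hrow <;>
    rcases forall_mapsRowIntoRow_or_forall_mapsRowIntoColumn
      (hinj.comp Prod.swap_injective) hπ' with hcol | hcol
  · have hfst p q : (π p).1 = (π q).1 := (hrow p.1 p.2 q.2).trans (hcol q.2 p.1 q.1)
    have : Subsingleton α := subsingleton_of_injective_prod_to_right (f := fun p => (π p).2)
      fun p q h => hinj (Prod.ext (hfst p q) h)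
    exact Or.inl ⟨hrow, fun j i i' => by rw [Subsingleton.elim i i']⟩
  · exact Or.inl ⟨hrow, hcol⟩
  · exact Or.inr ⟨hrow, hcol⟩
  · have hsnd p q : (π p).2 = (π q).2 := (hrow p.1 p.2 q.2).trans (hcol q.2 p.1 q.1)
    have : Subsingleton β := subsingleton_of_injective_prod_to_right
      (f := fun p : β × α => (π p.swap).1) fun p q h =>
        Prod.swap_injective (hinj (Prod.ext h (hsnd p.swap q.swap)))
    exact Or.inl ⟨fun i j j' => by rw [Subsingleton.elim j j'], hcol⟩

end SameLine

section IdempotentSemiring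

variable {S ι : Type*}

theorem eq_zero_of_add_eq_zero_of_idem [AddCommMonoid S] (hidem : ∀ a : S, a + a = a) {a b : S}
    (h : a + b = 0) : a = 0 :=
  calc a = a + (a + b) := by rw [h, add_zero]
    _ = 0 := by rw [← add_assoc, hidem, h]

theorem eq_zero_of_sum_eq_zero_of_idem [AddCommMonoid S] (hidem : ∀ a : S, a + a = a)
    {s : Finset ι} {f : ι → S} (h : ∑ x ∈ s, f x = 0) {a : ι} (ha : a ∈ s) : f a = 0 :=
  eq_zero_of_add_eq_zero_of_idem hidem ((Finset.add_sum_erase s f ha).trans h)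

theorem exists_isUnit_of_isUnit_sum [Semiring S] [Nontrivial S]
    (haui : ∀ a b : S, IsUnit (a + b) → IsUnit a ∨ IsUnit b) {s : Finset ι} {f : ι → S}
    (h : IsUnit (∑ x ∈ s, f x)) : ∃ a ∈ s, IsUnit (f a) := by
  induction s using Finset.cons_induction with
  | empty => exact absurd (isUnit_zero_iff.1 h) zero_ne_one
  | cons a s ha ih =>
    rw [Finset.sum_cons] at h
    rcases haui _ _ h with h | h
    · exact ⟨a, Finset.mem_cons_self a s, h⟩
    · obtain ⟨b, hb, hub⟩ := ih h
      exact ⟨b, Finset.mem_cons_of_mem hb, hub⟩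

end IdempotentSemiring

namespace Matrix

variable {S : Type*} [CommSemiring S] {m n : Type*} [DecidableEq m] [DecidableEq n]

theorem linearMap_apply_eq_sum [Fintype m] [Fintype n] (T : Matrix m n S →ₗ[S] Matrix m n S)
    (A : Matrix m n S) :
    T A = ∑ p : m × n, A p.1 p.2 • T (single p.1 p.2 1) := by
  conv_lhs => rw [A.matrix_eq_sum_single]
  simp only [map_sum, Fintype.sum_prod_type, ← LinearMap.map_smul, smul_single, smul_eq_mul,
    mul_one]

theorem eq_of_smul_single_eq_smul_single {u v : S} (hu : u ≠ 0) {p q : m × n}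
    (h : u • single p.1 p.2 (1 : S) = v • single q.1 q.2 1) : p = q := by
  by_contra hne
  have := congrFun (congrFun h p.1) p.2
  have hne' : ¬(q.1 = p.1 ∧ q.2 = p.2) := fun h => hne (Prod.ext h.1 h.2).symm
  simp only [smul_apply, single_apply, and_self, if_true, hne', if_false, mul_zero,
    smul_eq_mul, mul_one] at this
  exact hu this

theorem exists_map_single_eq_smul_single [Fintype m] [Fintype n] [Nontrivial S]
    (hidem : ∀ a : S, a + a = a) (haui : ∀ a b : S, IsUnit (a + b) → IsUnit a ∨ IsUnit b)
    {T : Matrix m n S →ₗ[S] Matrix m n S} (hT : Surjective T) (q : m × n) :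
    ∃ (p : m × n) (u : S), IsUnit u ∧ T (single p.1 p.2 1) = u • single q.1 q.2 1 := by
  obtain ⟨A, hA⟩ := hT (single q.1 q.2 1)
  have hentry k l :
      ∑ p : m × n, A p.1 p.2 * T (single p.1 p.2 1) k l = single q.1 q.2 1 k l := by
    rw [← hA, linearMap_apply_eq_sum T A, sum_apply]
    rfl
  -- the entry `1` at `q` forces a unit summand; every other entry is `0`, so all its summands are
  have hq : ∑ p : m × n, A p.1 p.2 * T (single p.1 p.2 1) q.1 q.2 = 1 :=
    (hentry q.1 q.2).trans (by simp)
  obtain ⟨p, -, hp⟩ := exists_isUnit_of_isUnit_sum haui (hq ▸ isUnit_one)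
  refine ⟨p, _, isUnit_of_mul_isUnit_right hp, ?_⟩
  ext k l
  by_cases hkl : q.1 = k ∧ q.2 = l
  · obtain ⟨rfl, rfl⟩ := hkl
    simp
  · have h0 := eq_zero_of_sum_eq_zero_of_idem hidem
      ((hentry k l).trans (by simp [hkl])) (Finset.mem_univ p)
    simp only [smul_apply, single_apply, hkl, if_false, smul_zero]
    exact (isUnit_of_mul_isUnit_left hp).mul_right_eq_zero.1 h0

theorem exists_injective_map_single_eq_smul_single [Fintype m] [Fintype n] [Nontrivial S]
    (hidem : ∀ a : S, a + a = a) (haui : ∀ a b : S, IsUnit (a + b) → IsUnit a ∨ IsUnit b)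
    {T : Matrix m n S →ₗ[S] Matrix m n S} (hT : Surjective T) :
    ∃ (π : m × n → m × n) (u : m × n → S), Injective π ∧ (∀ p, IsUnit (u p)) ∧
      ∀ p, T (single p.1 p.2 1) = u p • single (π p).1 (π p).2 1 := by
  choose g u hu hg using exists_map_single_eq_smul_single hidem haui hT
  have hginj : Injective g := fun q q' h =>
    eq_of_smul_single_eq_smul_single (hu q).ne_zero ((hg q).symm.trans (h ▸ hg q'))
  let e := Equiv.ofBijective g hginj.bijective_of_finite
  refine ⟨e.symm, u ∘ e.symm, e.symm.injective, fun p => hu _, fun p => ?_⟩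
  have h := hg (e.symm p)
  rwa [Equiv.ofBijective_apply_symm_apply g] at h

end Matrix

section matRank

open Matrix

variable {S : Type*} [CommSemiring S] {m n : ℕ}

theorem matRank_eq_one_iff {A : Matrix (Fin m) (Fin n) S} :
    matRank A = 1 ↔ A ≠ 0 ∧ ∃ (b : Fin m → S) (c : Fin n → S), A = vecMulVec b c := by
  by_cases hA : A = 0
  · simp [matRank, hA]
  simp only [matRank, hA, if_false, ne_eq, not_false_eq_true, true_and]
  constructor
  · intro h
    obtain ⟨-, B, C, rfl⟩ := h ▸ Nat.sInf_mem (Nat.nonempty_of_pos_sInf (h ▸ one_pos))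
    exact ⟨fun i => B i 0, C 0, by ext; simp [mul_apply, vecMulVec]⟩
  · rintro ⟨b, c, rfl⟩
    have h1 : 1 ∈ {k : ℕ | 0 < k ∧
        ∃ (B : Matrix (Fin m) (Fin k) S) (C : Matrix (Fin k) (Fin n) S), vecMulVec b c = B * C} :=
      ⟨one_pos, _, _, vecMulVec_eq (Fin 1) b c⟩
    exact le_antisymm (Nat.sInf_le h1) (le_csInf ⟨1, h1⟩ fun k hk => hk.1)

theorem matRank_single_add_single [Nontrivial S] {p q : Fin m × Fin n} (hne : p ≠ q)
    (hpq : SameLine p q) : matRank (single p.1 p.2 (1 : S) + single q.1 q.2 1) = 1 := by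
  refine matRank_eq_one_iff.2 ⟨fun h0 => ?_, ?_⟩
  · have hqp : ¬(q.1 = p.1 ∧ q.2 = p.2) := fun h => hne (Prod.ext h.1 h.2).symm
    simpa [single_apply, hqp] using congrFun (congrFun h0 p.1) p.2
  simp only [single_eq_single_vecMulVec_single]
  rcases hpq with h | h
  · exact ⟨_, _, by rw [h, ← vecMulVec_add]⟩
  · exact ⟨_, _, by rw [h, ← add_vecMulVec]⟩

theorem sameLine_of_matRank_smul_single_add_smul_single [Nontrivial S] {u v : S}
    (hu : IsUnit u) (hv : IsUnit v) {p q : Fin m × Fin n}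
    (h : matRank (u • single p.1 p.2 (1 : S) + v • single q.1 q.2 1) = 1) : SameLine p q := by
  obtain ⟨-, b, c, hbc⟩ := matRank_eq_one_iff.1 h
  by_contra hline
  obtain ⟨h1, h2⟩ := not_or.1 hline
  have entry i j := congrFun (congrFun hbc i) j
  have hp := entry p.1 p.2
  have hq := entry q.1 q.2
  have hpq := entry p.1 q.2
  simp only [smul_single, smul_eq_mul, mul_one, Matrix.add_apply, single_apply_same,
    single_apply_of_ne, h1, h2, Ne.symm h1, Ne.symm h2, and_self, and_false, and_true,
    not_false_eq_true, add_zero, zero_add, vecMulVec, of_apply] at hp hq hpq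
  -- `b p.1` and `c q.2` are units, yet their product is the entry `0`
  exact not_isUnit_zero (hpq ▸ (isUnit_of_mul_isUnit_left (hp ▸ hu)).mul
    (isUnit_of_mul_isUnit_right (hq ▸ hv)))

end matRank

theorem stmt9_general {S : Type*} [CommSemiring S]
    (haddidem : ∀ a : S, a + a = a)
    (haui : ∀ a b : S, IsUnit (a + b) → IsUnit a ∨ IsUnit b)
    {m n : ℕ}
    (T : Matrix (Fin m) (Fin n) S →ₗ[S] Matrix (Fin m) (Fin n) S)
    (hbij : Function.Bijective T)
    (h1 : ∀ A : Matrix (Fin m) (Fin n) S, matRank A = 1 → matRank (T A) = 1) :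
    ∃ (ρ : Equiv.Perm (Fin m)) (σ : Equiv.Perm (Fin n)) (α : Fin m → Fin n → S),
      (∀ i j, IsUnit (α i j)) ∧
      ((∀ (i : Fin m) (j : Fin n),
          T (Matrix.single i j 1) = α i j • Matrix.single (ρ i) (σ j) 1) ∨
       (∃ h : m = n, ∀ (i : Fin m) (j : Fin n),
          T (Matrix.single i j 1) =
            α i j • Matrix.single (Fin.cast h.symm (σ j)) (Fin.cast h (ρ i)) 1)) := by
  rcases subsingleton_or_nontrivial S with _ | _
  · exact ⟨1, 1, fun _ _ => 1, fun _ _ => isUnit_one, Or.inl fun _ _ => Subsingleton.elim _ _⟩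
  obtain ⟨π, u, hπinj, hu, hT⟩ :=
    Matrix.exists_injective_map_single_eq_smul_single haddidem haui hbij.2
  have hπ p q (hpq : SameLine p q) : SameLine (π p) (π q) := by
    rcases eq_or_ne p q with rfl | hne
    · exact Or.inl rfl
    refine sameLine_of_matRank_smul_single_add_smul_single (hu p) (hu q) ?_
    rw [← hT, ← hT, ← map_add]
    exact h1 _ (matRank_single_add_single hne hpq)
  rcases exists_perm_of_sameLine hπinj hπ with ⟨ρ, σ, hρσ⟩ | ⟨ρ, σ, hρσ⟩
  · exact ⟨ρ, σ, fun i j => u (i, j), fun i j => hu _, Or.inl fun i j => by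
      rw [hT (i, j), hρσ]⟩
  · obtain rfl : m = n := Fin.equiv_iff_eq.1 ⟨ρ⟩
    exact ⟨ρ, σ, fun i j => u (i, j), fun i j => hu _, Or.inr ⟨rfl, fun i j => by
      rw [hT (i, j), hρσ]; rfl⟩⟩

theorem stmt9 {S : Type*} [CommSemiring S]
    (haddidem : ∀ a : S, a + a = a)
    (hmc : ∀ a b c : S, a ≠ 0 → b * a = c * a → b = c)
    (haui : ∀ a b : S, IsUnit (a + b) → IsUnit a ∨ IsUnit b)
    {m n : ℕ}
    (T : Matrix (Fin m) (Fin n) S →ₗ[S] Matrix (Fin m) (Fin n) S)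
    (hbij : Function.Bijective T)
    (h1 : ∀ A : Matrix (Fin m) (Fin n) S, matRank A = 1 → matRank (T A) = 1) :
    ∃ (ρ : Equiv.Perm (Fin m)) (σ : Equiv.Perm (Fin n)) (α : Fin m → Fin n → S),
      (∀ i j, IsUnit (α i j)) ∧
      ((∀ (i : Fin m) (j : Fin n),
          T (Matrix.single i j 1) = α i j • Matrix.single (ρ i) (σ j) 1) ∨
       (∃ h : m = n, ∀ (i : Fin m) (j : Fin n),
          T (Matrix.single i j 1) =
            α i j • Matrix.single (Fin.cast h.symm (σ j)) (Fin.cast h (ρ i)) 1)) :=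
  stmt9_general haddidem haui T hbij h1
end

section
/- Let m > 1 and n > 1, and let A and B be two distinct m×n matrices over S with r(A) = r(B) = 1. If the number of nonzero entries of A is strictly greater than the number of nonzero entries of B, then there exists an m×n matrix C over S such that r(A + C) = 1 and r(B + C) = 2. -/
open scoped Classical

/-- The number of nonzero entries of a matrix. -/
noncomputable def nnz {S : Type*} [Zero S] {m n : ℕ} (A : Matrix (Fin m) (Fin n) S) : ℕ :=
  Nat.card {p : Fin m × Fin n // A p.1 p.2 ≠ 0}

section Aux

variable {S : Type*} [CommSemiring S]

lemma aux_nzd (hmc : ∀ a b c : S, a ≠ 0 → b * a = c * a → b = c)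
    {a b : S} (ha : a ≠ 0) (hb : b ≠ 0) : a * b ≠ 0 := by
  intro h
  exact ha (hmc b a 0 hb (by rw [zero_mul]; exact h))

lemma aux_zs (haddidem : ∀ a : S, a + a = a) {a b : S} (h : a + b = 0) : a = 0 := by
  have h2 : a + (a + b) = a + 0 := by rw [h]
  rw [← add_assoc, haddidem, add_zero] at h2
  exact h2.symm.trans h

lemma matRank_eq_one_of {m n : ℕ} {A : Matrix (Fin m) (Fin n) S}
    (hA : A ≠ 0) (a : Fin m → S) (x : Fin n → S) (h : ∀ i j, A i j = a i * x j) :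
    matRank A = 1 := by
  have h1 : (1:ℕ) ∈ {k : ℕ | 0 < k ∧
      ∃ (B : Matrix (Fin m) (Fin k) S) (C : Matrix (Fin k) (Fin n) S), A = B * C} := by
    refine ⟨one_pos, Matrix.of fun i _ => a i, Matrix.of fun _ j => x j, ?_⟩
    ext i j
    simp [Matrix.mul_apply, h i j]
  rw [matRank, if_neg hA]
  exact le_antisymm (Nat.sInf_le h1) (Nat.sInf_mem ⟨1, h1⟩).1

lemma matRank_one_fact {m n : ℕ} {A : Matrix (Fin m) (Fin n) S} (h : matRank A = 1) :
    A ≠ 0 ∧ ∃ (a : Fin m → S) (x : Fin n → S), ∀ i j, A i j = a i * x j := by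
  have hA : A ≠ 0 := by
    intro h0
    rw [matRank, if_pos h0] at h
    exact absurd h (by norm_num)
  rw [matRank, if_neg hA] at h
  have hne : {k : ℕ | 0 < k ∧
      ∃ (B : Matrix (Fin m) (Fin k) S) (C : Matrix (Fin k) (Fin n) S), A = B * C}.Nonempty := by
    by_contra hemp
    rw [Set.not_nonempty_iff_eq_empty] at hemp
    rw [hemp, Nat.sInf_empty] at h
    exact absurd h (by norm_num)
  have hmem := Nat.sInf_mem hne
  rw [h] at hmem
  obtain ⟨-, B1, C1, hBC⟩ := hmem
  refine ⟨hA, fun i => B1 i 0, fun j => C1 0 j, fun i j => ?_⟩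
  rw [hBC]
  simp [Matrix.mul_apply]

lemma matRank_eq_two_of {m n : ℕ} {A : Matrix (Fin m) (Fin n) S} (hA : A ≠ 0)
    (b v : Fin m → S) (y w : Fin n → S) (h : ∀ i j, A i j = b i * y j + v i * w j)
    (h1 : ∀ (u : Fin m → S) (z : Fin n → S), ¬ ∀ i j, A i j = u i * z j) :
    matRank A = 2 := by
  have h2 : (2:ℕ) ∈ {k : ℕ | 0 < k ∧
      ∃ (B : Matrix (Fin m) (Fin k) S) (C : Matrix (Fin k) (Fin n) S), A = B * C} := by
    refine ⟨two_pos, Matrix.of fun i k => if k = 0 then b i else v i,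
      Matrix.of fun k j => if k = 0 then y j else w j, ?_⟩
    ext i j
    simp [Matrix.mul_apply, Fin.sum_univ_two, h i j]
  have hn1 : (1:ℕ) ∉ {k : ℕ | 0 < k ∧
      ∃ (B : Matrix (Fin m) (Fin k) S) (C : Matrix (Fin k) (Fin n) S), A = B * C} := by
    rintro ⟨-, B1, C1, hBC⟩
    refine h1 (fun i => B1 i 0) (fun j => C1 0 j) (fun i j => ?_)
    rw [hBC]
    simp [Matrix.mul_apply]
  rw [matRank, if_neg hA]
  have hmem := Nat.sInf_mem (⟨2, h2⟩ : Set.Nonempty _)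
  have hle := Nat.sInf_le h2
  have hpos := hmem.1
  have hne1 : sInf {k : ℕ | 0 < k ∧
      ∃ (B : Matrix (Fin m) (Fin k) S) (C : Matrix (Fin k) (Fin n) S), A = B * C} ≠ 1 := by
    intro he
    exact hn1 (he ▸ hmem)
  omega

end Aux

theorem stmt13 {S : Type*} [CommSemiring S]
    (haddidem : ∀ a : S, a + a = a)
    (hmc : ∀ a b c : S, a ≠ 0 → b * a = c * a → b = c)
    (haui : ∀ a b : S, IsUnit (a + b) → IsUnit a ∨ IsUnit b)
    {m n : ℕ} (hm : 1 < m) (hn : 1 < n)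
    (A B : Matrix (Fin m) (Fin n) S) (hAB : A ≠ B)
    (hA : matRank A = 1) (hB : matRank B = 1)
    (hnnz : nnz B < nnz A) :
    ∃ C : Matrix (Fin m) (Fin n) S, matRank (A + C) = 1 ∧ matRank (B + C) = 2 := by
  obtain ⟨hA0, a, x, ha⟩ := matRank_one_fact hA
  obtain ⟨hB0, b, y, hb⟩ := matRank_one_fact hB
  -- find a position where A is nonzero and B is zero
  have hexists : ∃ i j, A i j ≠ 0 ∧ B i j = 0 := by
    by_contra hcon
    push_neg at hcon
    have hle : nnz A ≤ nnz B := by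
      apply Nat.card_le_card_of_injective
        (fun p : {p : Fin m × Fin n // A p.1 p.2 ≠ 0} =>
          (⟨p.1, hcon p.1.1 p.1.2 p.2⟩ : {p : Fin m × Fin n // B p.1 p.2 ≠ 0}))
      intro p q hpq
      simpa [Subtype.ext_iff] using hpq
    omega
  obtain ⟨i, j, hAij, hBij⟩ := hexists
  have haixj : a i * x j ≠ 0 := (ha i j) ▸ hAij
  have hai : a i ≠ 0 := fun h0 => haixj (by rw [h0, zero_mul])
  have hxj : x j ≠ 0 := fun h0 => haixj (by rw [h0, mul_zero])
  obtain ⟨p1, l, hB1⟩ : ∃ p q, B p q ≠ 0 := by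
    by_contra hc
    push_neg at hc
    exact hB0 (by ext p q; simpa using hc p q)
  have hbyl : b p1 * y l ≠ 0 := (hb p1 l) ▸ hB1
  have hbp1 : b p1 ≠ 0 := fun h0 => hbyl (by rw [h0, zero_mul])
  have hyl : y l ≠ 0 := fun h0 => hbyl (by rw [h0, mul_zero])
  have hby0 : b i = 0 ∨ y j = 0 := by
    by_contra hc
    push_neg at hc
    exact aux_nzd hmc hc.1 hc.2 ((hb i j).symm.trans hBij)
  rcases hby0 with hbi | hyj
  · -- row i of B is zero; perturb with a new column direction
    obtain ⟨q0, hq0⟩ := Fintype.exists_ne_of_one_lt_card (by simpa using hn) l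
    set C : Matrix (Fin m) (Fin n) S :=
      Matrix.of fun p q => a p * (if q = q0 then 1 else 0) with hC
    have hACne : A + C ≠ 0 := by
      intro h0
      apply hAij
      apply aux_zs haddidem (b := C i j)
      rw [← Matrix.add_apply, h0, Matrix.zero_apply]
    have hBCval : (B + C) i q0 = a i := by
      simp [hC, Matrix.add_apply, hb, hbi]
    have hBCne : B + C ≠ 0 := by
      intro h0
      apply hai
      rw [← hBCval, h0, Matrix.zero_apply]
    refine ⟨C, ?_, ?_⟩
    · refine matRank_eq_one_of hACne a (fun q => x q + if q = q0 then 1 else 0) (fun p q => ?_)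
      simp [hC, Matrix.add_apply, ha p q, mul_add]
    · refine matRank_eq_two_of hBCne b a y (fun q => if q = q0 then 1 else 0)
        (fun p q => by simp [hC, Matrix.add_apply, hb p q]) ?_
      intro u z huz
      have e1 : u i * z q0 = a i := (huz i q0).symm.trans hBCval
      have e2 : u p1 * z l = b p1 * y l := by
        rw [← huz p1 l]
        simp [hC, Matrix.add_apply, hb, Ne.symm hq0]
      have e3 : u i * z l = 0 := by
        rw [← huz i l]
        simp [hC, Matrix.add_apply, hb, hbi, Ne.symm hq0]
      have hkey : a i * (b p1 * y l) = 0 := by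
        calc a i * (b p1 * y l) = (u i * z q0) * (u p1 * z l) := by rw [e1, e2]
          _ = (u i * z l) * (u p1 * z q0) := by ring
          _ = 0 := by rw [e3, zero_mul]
      exact aux_nzd hmc hai (aux_nzd hmc hbp1 hyl) hkey
  · -- column j of B is zero; perturb with a new row direction
    obtain ⟨p0, hp0⟩ := Fintype.exists_ne_of_one_lt_card (by simpa using hm) p1
    set C : Matrix (Fin m) (Fin n) S :=
      Matrix.of fun p q => (if p = p0 then 1 else 0) * x q with hC
    have hACne : A + C ≠ 0 := by
      intro h0
      apply hAij
      apply aux_zs haddidem (b := C i j)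
      rw [← Matrix.add_apply, h0, Matrix.zero_apply]
    have hBCval : (B + C) p0 j = x j := by
      simp [hC, Matrix.add_apply, hb, hyj]
    have hBCne : B + C ≠ 0 := by
      intro h0
      apply hxj
      rw [← hBCval, h0, Matrix.zero_apply]
    refine ⟨C, ?_, ?_⟩
    · refine matRank_eq_one_of hACne (fun p => a p + if p = p0 then 1 else 0) x (fun p q => ?_)
      simp [hC, Matrix.add_apply, ha p q, add_mul]
    · refine matRank_eq_two_of hBCne b (fun p => if p = p0 then 1 else 0) y x
        (fun p q => by simp [hC, Matrix.add_apply, hb p q]) ?_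
      intro u z huz
      have e1 : u p0 * z j = x j := (huz p0 j).symm.trans hBCval
      have e2 : u p1 * z l = b p1 * y l := by
        rw [← huz p1 l]
        simp [hC, Matrix.add_apply, hb, Ne.symm hp0]
      have e3 : u p1 * z j = 0 := by
        rw [← huz p1 j]
        simp [hC, Matrix.add_apply, hb, hyj, Ne.symm hp0]
      have hkey : x j * (b p1 * y l) = 0 := by
        calc x j * (b p1 * y l) = (u p0 * z j) * (u p1 * z l) := by rw [e1, e2]
          _ = (u p1 * z j) * (u p0 * z l) := by ring
          _ = 0 := by rw [e3, zero_mul]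
      exact aux_nzd hmc hxj (aux_nzd hmc hbp1 hyl) hkey
end
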